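/- For a graph G with at least one edge, the following are equivalent: (a) q*(G) = 0; (b) e(A,Ā) ≥ 2√(e(A)·e(Ā)) for all vertex subsets A; (c) e(A,Ā) ≥ vol(A)·vol(Ā)/vol(G) for all vertex subsets A (i.e., ĥ_G ≥ 1). -/

import Mathlib

/-!
The contribution `e(A)/m - vol(A)²/(4m²)` of a part `A` to the modularity score equals
`(vol(A)vol(Ā)/vol(G) - e(A,Ā))/vol(G)`, so condition (c) at `A` says exactly that `A` contributes
nonpositively. Hence (c) makes every partition score at most `0`, which the one-part partition
attains; conversely the bipartition `{A, Ā}` scores twice the contribution of `A`, the contribution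
being symmetric under complement. Condition (b) is (c) in disguise, by the identity
`vol(G)e(A,Ā) - vol(A)vol(Ā) = e(A,Ā)² - 4e(A)e(Ā)`.
-/

open Finset
open scoped Classical

noncomputable section

variable {V : Type*} [Fintype V]

/-- Number of edges between `A` and `B` (each cross edge counted once when `A`,`B` disjoint). -/
def ecut (G : SimpleGraph V) (A B : Finset V) : ℝ :=
  ((A ×ˢ B).filter fun p => G.Adj p.1 p.2).card

/-- Number of edges inside `A`. -/
def ein (G : SimpleGraph V) (A : Finset V) : ℝ := ecut G A A / 2

/-- Volume of a vertex set: sum of degrees. -/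
def gvol (G : SimpleGraph V) (A : Finset V) : ℝ := ∑ v ∈ A, (G.degree v : ℝ)

/-- Number of edges of `G`. -/
def edgecount (G : SimpleGraph V) : ℝ := (G.edgeFinset.card : ℝ)

/-- Conductance (Cheeger constant) `h_G`. -/
def conduct (G : SimpleGraph V) : ℝ :=
  sInf { x | ∃ A : Finset V, A.Nonempty ∧ A ≠ univ ∧
    x = ecut G A Aᶜ / min (gvol G A) (gvol G Aᶜ) }

/-- Expansion-by-products `ĥ_G`. -/
def hhat (G : SimpleGraph V) : ℝ :=
  sInf { x | ∃ A : Finset V, A.Nonempty ∧ A ≠ univ ∧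
    x = ecut G A Aᶜ * gvol G univ / (gvol G A * gvol G Aᶜ) }

/-- Modularity score of a vertex partition. -/
def modScore (G : SimpleGraph V) (P : Finpartition (univ : Finset V)) : ℝ :=
  (∑ A ∈ P.parts, ein G A) / edgecount G
    - (∑ A ∈ P.parts, (gvol G A) ^ 2) / (4 * (edgecount G) ^ 2)

/-- Modularity `q*(G)`: maximum modularity score over vertex partitions. -/
def modularity (G : SimpleGraph V) : ℝ :=
  sSup { x | ∃ P : Finpartition (univ : Finset V), x = modScore G P }

lemma two_mul_sqrt_le_iff {x c : ℝ} (hx : 0 ≤ x) (hc : 0 ≤ c) :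
    2 * √x ≤ c ↔ 4 * x ≤ c ^ 2 := by
  rw [← pow_le_pow_iff_left₀ (by positivity) hc two_ne_zero, mul_pow, Real.sq_sqrt hx]
  norm_num

section

variable {V : Type*} (G : SimpleGraph V)

lemma ecut_comm (A B : Finset V) : ecut G A B = ecut G B A := by
  unfold ecut
  congr 1
  exact card_bij' (fun p _ ↦ p.swap) (fun p _ ↦ p.swap) (by simp [G.adj_comm, and_comm])
    (by simp [G.adj_comm, and_comm]) (by simp) (by simp)

lemma ecut_union_right (A : Finset V) {B C : Finset V} (h : Disjoint B C) :
    ecut G A (B ∪ C) = ecut G A B + ecut G A C := by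
  unfold ecut
  rw [product_union, filter_union, card_union_of_disjoint
    (disjoint_filter_filter (disjoint_product.2 (Or.inr h))), Nat.cast_add]

lemma ecut_nonneg (A B : Finset V) : 0 ≤ ecut G A B :=
  Nat.cast_nonneg _

lemma ein_nonneg (A : Finset V) : 0 ≤ ein G A :=
  div_nonneg (ecut_nonneg G A A) zero_le_two

end

section

variable (G : SimpleGraph V)

lemma ecut_univ_right (A : Finset V) : ecut G A univ = gvol G A := by
  rw [ecut, gvol, card_filter, sum_product, Nat.cast_sum]
  refine sum_congr rfl fun v _ ↦ ?_
  rw [← G.card_neighborFinset_eq_degree, G.neighborFinset_eq_filter, card_filter]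

lemma gvol_nonneg (A : Finset V) : 0 ≤ gvol G A :=
  sum_nonneg fun _ _ ↦ Nat.cast_nonneg _

lemma gvol_le_gvol_univ (A : Finset V) : gvol G A ≤ gvol G univ :=
  sum_le_sum_of_subset_of_nonneg (subset_univ A) fun _ _ _ ↦ Nat.cast_nonneg _

lemma gvol_add_gvol_compl (A : Finset V) : gvol G A + gvol G Aᶜ = gvol G univ :=
  sum_add_sum_compl A _

lemma gvol_univ : gvol G univ = 2 * edgecount G := by
  simp only [gvol, edgecount, ← Nat.cast_sum, G.sum_degrees_eq_twice_card_edges]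
  push_cast
  rfl

lemma gvol_eq_two_mul_ein_add_ecut (A : Finset V) :
    gvol G A = 2 * ein G A + ecut G A Aᶜ := by
  rw [← ecut_univ_right, ← union_compl A, ecut_union_right G A disjoint_compl_right, ein]
  ring

lemma gvol_univ_mul_ecut_sub_gvol_mul_gvol_compl (A : Finset V) :
    gvol G univ * ecut G A Aᶜ - gvol G A * gvol G Aᶜ =
      ecut G A Aᶜ ^ 2 - 4 * ein G A * ein G Aᶜ := by
  have hA := gvol_eq_two_mul_ein_add_ecut G A
  have hAc := gvol_eq_two_mul_ein_add_ecut G Aᶜ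
  rw [compl_compl, ecut_comm] at hAc
  rw [← gvol_add_gvol_compl G A, hA, hAc]
  ring

lemma gvol_mul_gvol_compl_div_le_ecut_iff (A : Finset V) :
    gvol G A * gvol G Aᶜ / gvol G univ ≤ ecut G A Aᶜ ↔
      4 * ein G A * ein G Aᶜ ≤ ecut G A Aᶜ ^ 2 := by
  have key := gvol_univ_mul_ecut_sub_gvol_mul_gvol_compl G A
  rcases (gvol_nonneg G univ).eq_or_lt with hV | hV
  · have hA : gvol G A = 0 := le_antisymm (hV ▸ gvol_le_gvol_univ G A) (gvol_nonneg G A)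
    simp only [← hV, hA, zero_mul, sub_zero, div_zero] at key ⊢
    constructor <;> intro <;> linarith [ecut_nonneg G A Aᶜ]
  · rw [div_le_iff₀ hV]
    constructor <;> intro <;> linarith

def modContrib (A : Finset V) : ℝ :=
  ein G A / edgecount G - gvol G A ^ 2 / (4 * edgecount G ^ 2)

lemma modScore_eq_sum_modContrib (P : Finpartition (univ : Finset V)) :
    modScore G P = ∑ A ∈ P.parts, modContrib G A := by
  rw [modScore, sum_div, sum_div, ← sum_sub_distrib]
  rfl

lemma modContrib_eq (A : Finset V) :
    modContrib G A = (gvol G A * gvol G Aᶜ / gvol G univ - ecut G A Aᶜ) / gvol G univ := by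
  rw [modContrib, gvol_univ]
  rcases eq_or_ne (edgecount G) 0 with hm | hm
  · simp [hm]
  have hA := gvol_eq_two_mul_ein_add_ecut G A
  have hAc : gvol G Aᶜ = 2 * edgecount G - gvol G A := by
    linarith [gvol_add_gvol_compl G A, gvol_univ G]
  rw [hAc, hA]
  field_simp
  ring

lemma modContrib_compl (A : Finset V) : modContrib G Aᶜ = modContrib G A := by
  rw [modContrib_eq, modContrib_eq, compl_compl, mul_comm, ecut_comm]

lemma modContrib_univ : modContrib G univ = 0 := by
  simp [modContrib_eq, gvol, ecut]

lemma modContrib_nonpos_iff (A : Finset V) :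
    modContrib G A ≤ 0 ↔ gvol G A * gvol G Aᶜ / gvol G univ ≤ ecut G A Aᶜ := by
  rw [modContrib_eq]
  rcases (gvol_nonneg G univ).eq_or_lt with hV | hV
  · simp [← hV, ecut_nonneg]
  · rw [div_le_iff₀ hV, zero_mul, sub_nonpos]

lemma modularity_eq_iSup : modularity G = ⨆ P, modScore G P := by
  rw [modularity, iSup]
  congr 1
  ext x
  exact exists_congr fun P ↦ eq_comm

lemma modScore_top : modScore G ⊤ = 0 := by
  rw [modScore_eq_sum_modContrib]
  exact sum_eq_zero fun A hA ↦ mem_singleton.1 (Finpartition.parts_top_subset _ hA) ▸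
    modContrib_univ G

lemma modularity_eq_zero_iff_forall_modScore_nonpos :
    modularity G = 0 ↔ ∀ P, modScore G P ≤ 0 := by
  have hbdd : BddAbove (Set.range (modScore G)) := (Set.finite_range _).bddAbove
  rw [modularity_eq_iSup]
  refine ⟨fun h P ↦ h ▸ le_ciSup hbdd P, fun h ↦ le_antisymm (ciSup_le h) ?_⟩
  exact modScore_top G ▸ le_ciSup hbdd ⊤

lemma forall_modScore_nonpos_iff :
    (∀ P, modScore G P ≤ 0) ↔ ∀ A, modContrib G A ≤ 0 := by
  constructor
  · intro h A
    rcases eq_or_ne A ∅ with rfl | hA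
    · rw [← compl_univ, modContrib_compl, modContrib_univ]
    rcases eq_or_ne Aᶜ ∅ with hAc | hAc
    · rw [← modContrib_compl, hAc, ← compl_univ, modContrib_compl, modContrib_univ]
    have : Nonempty V := (nonempty_iff_ne_empty.2 hA).to_type
    have hbip := h ((Finpartition.indiscrete hA).extend hAc disjoint_compl_right (union_compl A))
    rw [modScore_eq_sum_modContrib, Finpartition.extend_parts, Finpartition.indiscrete_parts,
      sum_pair compl_ne_self, modContrib_compl] at hbip
    linarith
  · intro h P
    exact modScore_eq_sum_modContrib G P ▸ sum_nonpos fun A _ ↦ h A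

end

theorem stmt15_general {V : Type*} [Fintype V] (G : SimpleGraph V) :
    (modularity G = 0 ↔
      ∀ A : Finset V, 2 * Real.sqrt (ein G A * ein G Aᶜ) ≤ ecut G A Aᶜ) ∧
    (modularity G = 0 ↔
      ∀ A : Finset V, gvol G A * gvol G Aᶜ / gvol G univ ≤ ecut G A Aᶜ) := by
  have hc := (modularity_eq_zero_iff_forall_modScore_nonpos G).trans
    ((forall_modScore_nonpos_iff G).trans (forall_congr' (modContrib_nonpos_iff G)))
  refine ⟨hc.trans (forall_congr' fun A ↦ ?_), hc⟩
  rw [two_mul_sqrt_le_iff (mul_nonneg (ein_nonneg G A) (ein_nonneg G Aᶜ)) (ecut_nonneg G A Aᶜ),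
    gvol_mul_gvol_compl_div_le_ecut_iff, mul_assoc]

/-- For a graph `G` with at least one edge, `q*(G) = 0` iff
`e(A,Ā) ≥ 2√(e(A)e(Ā))` for all `A`, iff `e(A,Ā) ≥ vol(A)vol(Ā)/vol(G)` for all `A`. -/
theorem stmt15 {V : Type*} [Fintype V] (G : SimpleGraph V) (hG : G.edgeFinset.Nonempty) :
    (modularity G = 0 ↔
      ∀ A : Finset V, 2 * Real.sqrt (ein G A * ein G Aᶜ) ≤ ecut G A Aᶜ) ∧
    (modularity G = 0 ↔
      ∀ A : Finset V, gvol G A * gvol G Aᶜ / gvol G univ ≤ ecut G A Aᶜ) :=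
  stmt15_general G
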